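/- (Theorem 1, net consumption zone) Let τ_t ∈ [0, (T−t−1)·v̄] satisfy −π_t⁺ ∈ h_{t+1}(τ_t). Then the decision d*_i = l_i(π_t⁺) for every i together with v* = min{v̄, max{y_t − τ_t, 0}} is an optimal solution of the Bellman equation at time t whenever v* + Σ_i d*_i > r_t; equivalently, (v*, d*) solves the convex program P⁺: maximize Σ_i U_i(d_i) − π_t⁺(v + Σ_i d_i − r_t) + V̄_{t+1}(y_t − v) subject to v + Σ_i d_i ≥ r_t, d ∈ D, v ∈ [0, min{v̄, y_t}], with the net-consumption constraint inactive. -/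

import Mathlib

/-!
The value functions are concave in the remaining demand. The stage reward is jointly concave in
the decision (concave utilities minus the NEM payment, a maximum of two linear functions) and the
feasible decisions have a convex graph, so each Bellman step, a supremum over the fibres of a
jointly concave function, preserves concavity; so does the expectation over the renewables, whose
integrability comes from a growth bound and a Lipschitz bound in the renewable level that are
propagated along the backward induction.

In the net-consumption zone the payment at the candidate equals `π⁺` times the net consumption,
and everywhere else it is at least that, so it suffices to maximize the separable objective of
`P⁺`. Each `dᵢ` is handled by the first-order condition. For `v`, the concave function
`z ↦ V̄_{t+1}(z) + π⁺ z` is maximal at `τ` because `-π⁺ ∈ h_{t+1}(τ)`, so over the window of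
reachable remaining demands `y - v` its maximum sits at the point of the window closest to `τ`.
-/

open MeasureTheory Set

/-- NEM X payment for net consumption `z` with buy price `pp` and sell price `pm`. -/
noncomputable def NEMPayment (pp pm z : ℝ) : ℝ := pp * max z 0 - pm * max (-z) 0

/-- The superdifferential of a function `f : ℝ → ℝ` (viewed as a concave function
on `[0, ∞)`) at a point `y`. -/
def superdiff (f : ℝ → ℝ) (y : ℝ) : Set ℝ :=
  {s | ∀ z, 0 ≤ z → f z ≤ f y + s * (z - y)}

/-- Data of the EV-charging / flexible-consumption dynamic program over horizon
`{0, …, T-1}` with `K` flexible loads, under NEM time-of-use prices. -/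
structure EVModel (K T : ℕ) (Ω : Type) [MeasurableSpace Ω] where
  /-- underlying probability measure -/
  μ : Measure Ω
  prob : IsProbabilityMeasure μ
  /-- consumption upper bounds -/
  dbar : Fin K → ℝ
  dbar_pos : ∀ i, 0 < dbar i
  /-- device utility functions -/
  U : Fin K → ℝ → ℝ
  U_strictConcave : ∀ i, StrictConcaveOn ℝ (Icc 0 (dbar i)) (U i)
  U_strictMono : ∀ i, StrictMonoOn (U i) (Icc 0 (dbar i))
  U_diff : ∀ i, ∀ x ∈ Icc 0 (dbar i), DifferentiableWithinAt ℝ (U i) (Icc 0 (dbar i)) x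
  U_contDeriv : ∀ i, ContinuousOn (fun x => derivWithin (U i) (Icc 0 (dbar i)) x) (Icc 0 (dbar i))
  U_zero : ∀ i, U i 0 = 0
  /-- renewable processes -/
  r : ℕ → Ω → ℝ
  r_meas : ∀ t, Measurable (r t)
  r_nonneg : ∀ t ω, 0 ≤ r t ω
  r_int : ∀ t, Integrable (r t) μ
  r_indep : ProbabilityTheory.iIndepFun r μ
  /-- time-of-use buy prices `π_t⁺` -/
  pip : ℕ → ℝ
  /-- time-of-use sell prices `π_t⁻` -/
  pim : ℕ → ℝ
  /-- maximal per-period EV charge -/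
  vbar : ℝ
  vbar_pos : 0 < vbar
  /-- per-unit penalty for unmet EV demand at the horizon -/
  γ : ℝ
  /-- `π_off⁻ = min_t π_t⁻` -/
  pioff : ℝ
  pioff_le : ∀ t < T, pioff ≤ pim t
  pioff_attained : ∃ t < T, pioff = pim t
  /-- assumption A1 -/
  A1 : ∀ t < T, 0 < pim t ∧ pim t ≤ pip t ∧ pip t < γ

namespace EVModel

variable {K T : ℕ} {Ω : Type} [MeasurableSpace Ω]

/-- Stage reward `g_t(x_t, v, d)`. -/
noncomputable def stage (M : EVModel K T Ω) (t : ℕ) (rt v : ℝ) (d : Fin K → ℝ) : ℝ :=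
  ∑ i, M.U i (d i) - NEMPayment (M.pip t) (M.pim t) (v + ∑ i, d i - rt)

/-- Feasible decisions `(v, d)` given remaining demand `y`. -/
def feas (M : EVModel K T Ω) (y : ℝ) : Set (ℝ × (Fin K → ℝ)) :=
  {p | p.1 ∈ Icc 0 (min M.vbar y) ∧ ∀ i, p.2 i ∈ Icc 0 (M.dbar i)}

/-- Value function indexed by `k = T - 1 - t`, the number of remaining periods after
the current one. -/
noncomputable def W (M : EVModel K T Ω) : ℕ → ℝ → ℝ → ℝ
  | 0 => fun y rt => sSup ((fun p : ℝ × (Fin K → ℝ) =>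
      M.stage (T - 1) rt p.1 p.2 - M.γ * (y - p.1)) '' M.feas y)
  | (k + 1) => fun y rt => sSup ((fun p : ℝ × (Fin K → ℝ) =>
      M.stage (T - 2 - k) rt p.1 p.2 +
        ∫ ω, M.W k (y - p.1) (M.r (T - 1 - k) ω) ∂M.μ) '' M.feas y)

/-- Value function `V_t(y, r_t)` (the price argument is determined by `t`). -/
noncomputable def V (M : EVModel K T Ω) (t : ℕ) (y rt : ℝ) : ℝ := M.W (T - 1 - t) y rt

/-- Expected value function `V̄_t(y) = E[V_t(y, r_t, π_t)]`. -/
noncomputable def Vbar (M : EVModel K T Ω) (t : ℕ) (y : ℝ) : ℝ := ∫ ω, M.V t y (M.r t ω) ∂M.μ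

/-- Objective of the Bellman equation at time `t` in state `(y, rt)`. -/
noncomputable def bellObj (M : EVModel K T Ω) (t : ℕ) (y rt : ℝ) (p : ℝ × (Fin K → ℝ)) : ℝ :=
  if t = T - 1 then M.stage t rt p.1 p.2 - M.γ * (y - p.1)
  else M.stage t rt p.1 p.2 + ∫ ω, M.V (t + 1) (y - p.1) (M.r (t + 1) ω) ∂M.μ

/-- `(v, d)` is an optimal solution of the Bellman equation at time `t`. -/
def IsBellmanOpt (M : EVModel K T Ω) (t : ℕ) (y rt : ℝ) (p : ℝ × (Fin K → ℝ)) : Prop :=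
  p ∈ M.feas y ∧ ∀ q ∈ M.feas y, M.bellObj t y rt q ≤ M.bellObj t y rt p

/-- Superdifferential `h_t` of the concave expected value function `V̄_t`. -/
noncomputable def h (M : EVModel K T Ω) (t : ℕ) (y : ℝ) : Set ℝ := superdiff (M.Vbar t) y

end EVModel

section NEMPayment

variable {pp pm : ℝ}

theorem NEMPayment_eq_max (h : pm ≤ pp) (z : ℝ) : NEMPayment pp pm z = max (pp * z) (pm * z) := by
  unfold NEMPayment
  rcases le_total z 0 with hz | hz
  · rw [max_eq_right hz, max_eq_left (neg_nonneg.2 hz), max_eq_right (by nlinarith)]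
    ring
  · rw [max_eq_left hz, max_eq_right (neg_nonpos.2 hz), max_eq_left (by nlinarith)]
    ring

theorem NEMPayment_of_nonneg {z : ℝ} (hz : 0 ≤ z) : NEMPayment pp pm z = pp * z := by
  simp [NEMPayment, hz]

theorem mul_le_NEMPayment_left (h : pm ≤ pp) (z : ℝ) : pp * z ≤ NEMPayment pp pm z :=
  (NEMPayment_eq_max h z).symm ▸ le_max_left _ _

theorem mul_le_NEMPayment_right (h : pm ≤ pp) (z : ℝ) : pm * z ≤ NEMPayment pp pm z :=
  (NEMPayment_eq_max h z).symm ▸ le_max_right _ _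

theorem convexOn_NEMPayment (h : pm ≤ pp) : ConvexOn ℝ univ (NEMPayment pp pm) := by
  rw [show NEMPayment pp pm = (fun z => pp * z) ⊔ fun z => pm * z from
    funext (NEMPayment_eq_max h)]
  exact ((LinearMap.mulLeft ℝ pp).convexOn convex_univ).sup
    ((LinearMap.mulLeft ℝ pm).convexOn convex_univ)

theorem abs_NEMPayment_sub_le (hpm : 0 ≤ pm) (h : pm ≤ pp) (z₁ z₂ : ℝ) :
    |NEMPayment pp pm z₁ - NEMPayment pp pm z₂| ≤ pp * |z₁ - z₂| := by
  rw [NEMPayment_eq_max h, NEMPayment_eq_max h]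
  refine (abs_max_sub_max_le_max _ _ _ _).trans (max_le ?_ ?_) <;>
    rw [← mul_sub, abs_mul, abs_of_nonneg (by linarith)]
  exact mul_le_mul_of_nonneg_right h (abs_nonneg _)

end NEMPayment

theorem abs_ciSup_sub_ciSup_le {ι : Sort*} [Nonempty ι] {f g : ι → ℝ} {ε : ℝ}
    (hf : BddAbove (range f)) (hg : BddAbove (range g)) (h : ∀ i, |f i - g i| ≤ ε) :
    |(⨆ i, f i) - ⨆ i, g i| ≤ ε := by
  rw [abs_sub_le_iff, sub_le_iff_le_add, sub_le_iff_le_add]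
  constructor
  · refine ciSup_le fun i => ?_
    linarith [le_ciSup hg i, (abs_sub_le_iff.1 (h i)).1]
  · refine ciSup_le fun i => ?_
    linarith [le_ciSup hf i, (abs_sub_le_iff.1 (h i)).2]

theorem ConcaveOn.ciSup_fiber {E P : Type*} [AddCommGroup E] [Module ℝ E] [AddCommGroup P]
    [Module ℝ P] {F : E → Set P} {G : E × P → ℝ} (hG : ConcaveOn ℝ {q | q.2 ∈ F q.1} G)
    {S : Set E} (hS : Convex ℝ S) (hne : ∀ x ∈ S, Nonempty (F x))
    (hbdd : ∀ x ∈ S, BddAbove (range fun p : F x => G (x, p))) :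
    ConcaveOn ℝ S fun x => ⨆ p : F x, G (x, p) := by
  refine ⟨hS, fun x₁ hx₁ x₂ hx₂ a b ha hb hab => ?_⟩
  have := hne x₁ hx₁
  have := hne x₂ hx₂
  simp only [smul_eq_mul]
  rw [Real.mul_iSup_of_nonneg ha, Real.mul_iSup_of_nonneg hb]
  refine ciSup_add_ciSup_le fun p₁ p₂ => ?_
  have hmem : a • (x₁, (p₁ : P)) + b • (x₂, (p₂ : P)) ∈ {q | q.2 ∈ F q.1} :=
    hG.1 p₁.2 p₂.2 ha hb hab
  calc a * G (x₁, p₁) + b * G (x₂, p₂) ≤ G (a • (x₁, ↑p₁) + b • (x₂, ↑p₂)) :=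
        hG.2 p₁.2 p₂.2 ha hb hab
    _ ≤ ⨆ p : F (a • x₁ + b • x₂), G (a • x₁ + b • x₂, p) :=
        le_ciSup_of_le (hbdd _ (hS hx₁ hx₂ ha hb hab)) ⟨_, hmem⟩ le_rfl

theorem ConcaveOn.le_add_mul_sub_of_hasDerivWithinAt {S : Set ℝ} {f : ℝ → ℝ} {f' a x : ℝ}
    (hf : ConcaveOn ℝ S f) (ha : a ∈ S) (hx : x ∈ S) (hd : HasDerivWithinAt f f' S a) :
    f x ≤ f a + f' * (x - a) := by
  rcases lt_trichotomy x a with hxa | rfl | hax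
  · have := hf.le_slope_of_hasDerivWithinAt hx ha hxa hd
    rw [slope_def_field, le_div_iff₀ (sub_pos.2 hxa)] at this
    linarith
  · simp
  · have := hf.slope_le_of_hasDerivWithinAt ha hx hax hd
    rw [slope_def_field, div_le_iff₀ (sub_pos.2 hax)] at this
    linarith

theorem ConcaveOn.isMaxOn_sub_mul_of_hasDerivWithinAt {S : Set ℝ} {f : ℝ → ℝ} {f' π a : ℝ}
    (hf : ConcaveOn ℝ S f) (ha : a ∈ S) (hd : HasDerivWithinAt f f' S a)
    (hfoc : ∀ x ∈ S, (f' - π) * (x - a) ≤ 0) : IsMaxOn (fun x => f x - π * x) S a :=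
  isMaxOn_iff.2 fun x hx => by
    have := hf.le_add_mul_sub_of_hasDerivWithinAt ha hx hd
    nlinarith [hfoc x hx]

theorem ConcaveOn.isMaxOn_sub_clip {f : ℝ → ℝ} (hf : ConcaveOn ℝ (Ici 0) f) {τ vb y : ℝ}
    (hτ : 0 ≤ τ) (hmax : ∀ z, 0 ≤ z → f z ≤ f τ) :
    IsMaxOn (fun v => f (y - v)) (Icc 0 (min vb y)) (min vb (max (y - τ) 0)) := by
  refine isMaxOn_iff.2 fun v ⟨hv, hvmin⟩ => ?_
  have hvb := hvmin.trans (min_le_left _ _)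
  have hvy := hvmin.trans (min_le_right _ _)
  rcases le_total y τ with hyτ | hτy
  · rw [max_eq_right (by linarith), min_eq_right (by linarith), sub_zero]
    exact (le_min le_rfl (hmax _ (by linarith))).trans
      (hf.min_le_of_mem_Icc (mem_Ici.2 (by linarith)) (mem_Ici.2 hτ) ⟨by linarith, hyτ⟩)
  rcases le_total (y - τ) vb with hτvb | hvbτ
  · rw [max_eq_left (by linarith), min_eq_right hτvb, sub_sub_cancel]
    exact hmax _ (by linarith)
  · rw [max_eq_left (by linarith), min_eq_left hvbτ]
    exact (le_min (hmax _ (by linarith)) le_rfl).trans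
      (hf.min_le_of_mem_Icc (mem_Ici.2 hτ) (mem_Ici.2 (by linarith)) ⟨by linarith, by linarith⟩)

theorem LipschitzWith.integrable_comp {Ω : Type*} [MeasurableSpace Ω] {μ : Measure Ω}
    [IsFiniteMeasure μ] {g : ℝ → ℝ} {K : NNReal} (hg : LipschitzWith K g) {X : Ω → ℝ}
    (hX : Integrable X μ) : Integrable (fun ω => g (X ω)) μ := by
  refine ((hX.abs.const_mul K).add (integrable_const |g 0|)).mono'
    (hg.continuous.comp_aestronglyMeasurable hX.1) (ae_of_all _ fun ω => ?_)
  have := hg.dist_le_mul (X ω) 0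
  rw [Real.dist_eq, Real.dist_eq, sub_zero] at this
  simp only [Real.norm_eq_abs, Pi.add_apply]
  linarith [abs_sub_abs_le_abs_sub (g (X ω)) (g 0)]

/-- Invariant of the backward induction for a value `w y c` at remaining demand `y` and renewable
level `c`. -/
structure IsRegularValue (γ A : ℝ) (w : ℝ → ℝ → ℝ) : Prop where
  le_add_mul_abs : ∀ y, 0 ≤ y → ∀ c, w y c ≤ A + γ * |c|
  abs_sub_le : ∀ y, 0 ≤ y → ∀ c₁ c₂, |w y c₁ - w y c₂| ≤ γ * |c₁ - c₂|
  concaveOn : ∀ c, ConcaveOn ℝ (Ici 0) fun y => w y c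

namespace IsRegularValue

variable {γ A : ℝ} {w : ℝ → ℝ → ℝ} {Ω : Type*} [MeasurableSpace Ω] {μ : Measure Ω} {X : Ω → ℝ}

theorem integrable [IsFiniteMeasure μ] (hw : IsRegularValue γ A w) (hX : Integrable X μ) {y : ℝ}
    (hy : 0 ≤ y) : Integrable (fun ω => w y (X ω)) μ :=
  (LipschitzWith.of_dist_le' fun c₁ c₂ => by
    simpa only [Real.dist_eq] using hw.abs_sub_le y hy c₁ c₂).integrable_comp hX

theorem integral_le [IsProbabilityMeasure μ] (hw : IsRegularValue γ A w) (hX : Integrable X μ)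
    {y : ℝ} (hy : 0 ≤ y) : ∫ ω, w y (X ω) ∂μ ≤ A + γ * ∫ ω, |X ω| ∂μ := by
  have hbound : Integrable (fun ω => A + γ * |X ω|) μ :=
    (integrable_const A).add (hX.abs.const_mul γ)
  calc ∫ ω, w y (X ω) ∂μ ≤ ∫ ω, A + γ * |X ω| ∂μ :=
        integral_mono (hw.integrable hX hy) hbound fun ω => hw.le_add_mul_abs y hy (X ω)
    _ = A + γ * ∫ ω, |X ω| ∂μ := by
        rw [integral_add (integrable_const A) (hX.abs.const_mul γ), integral_const,
          integral_const_mul, probReal_univ, one_smul]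

theorem concaveOn_integral [IsFiniteMeasure μ] (hw : IsRegularValue γ A w)
    (hX : Integrable X μ) : ConcaveOn ℝ (Ici 0) fun y => ∫ ω, w y (X ω) ∂μ := by
  refine ⟨convex_Ici 0, fun y₁ hy₁ y₂ hy₂ a b ha hb hab => ?_⟩
  have h₁ := (hw.integrable hX hy₁).const_mul a
  have h₂ := (hw.integrable hX hy₂).const_mul b
  simp only [smul_eq_mul]
  rw [← integral_const_mul, ← integral_const_mul, ← integral_add h₁ h₂]
  exact integral_mono (h₁.add h₂) (hw.integrable hX (convex_Ici 0 hy₁ hy₂ ha hb hab))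
    fun ω => (hw.concaveOn (X ω)).2 hy₁ hy₂ ha hb hab

end IsRegularValue

namespace EVModel

variable {K T : ℕ} {Ω : Type} [MeasurableSpace Ω] (M : EVModel K T Ω) {s : ℕ}

theorem stage_le (hs : s < T) {v : ℝ} (hv : 0 ≤ v) {d : Fin K → ℝ}
    (hd : ∀ i, d i ∈ Icc 0 (M.dbar i)) (c : ℝ) :
    M.stage s c v d ≤ ∑ i, M.U i (M.dbar i) + M.γ * |c| := by
  obtain ⟨hpm, hpmp, hpγ⟩ := M.A1 s hs
  have hU : ∑ i, M.U i (d i) ≤ ∑ i, M.U i (M.dbar i) := Finset.sum_le_sum fun i _ =>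
    (M.U_strictMono i).monotoneOn (hd i) ⟨(M.dbar_pos i).le, le_rfl⟩ (hd i).2
  have hd₀ : 0 ≤ ∑ i, d i := Finset.sum_nonneg fun i _ => (hd i).1
  have hN := mul_le_NEMPayment_right hpmp (v + ∑ i, d i - c)
  have hc₁ := mul_le_mul_of_nonneg_left (le_abs_self c) hpm.le
  have hc₂ := mul_le_mul_of_nonneg_right (hpmp.trans hpγ.le) (abs_nonneg c)
  have hc₃ := mul_nonneg hpm.le (add_nonneg hv hd₀)
  unfold stage
  linarith

theorem abs_stage_sub_stage_le (hs : s < T) (v : ℝ) (d : Fin K → ℝ) (c₁ c₂ : ℝ) :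
    |M.stage s c₁ v d - M.stage s c₂ v d| ≤ M.γ * |c₁ - c₂| := by
  obtain ⟨hpm, hpmp, hpγ⟩ := M.A1 s hs
  unfold stage
  rw [sub_sub_sub_cancel_left, abs_sub_comm]
  refine (abs_NEMPayment_sub_le hpm.le hpmp _ _).trans ?_
  rw [show v + ∑ i, d i - c₁ - (v + ∑ i, d i - c₂) = c₂ - c₁ by ring, abs_sub_comm]
  exact mul_le_mul_of_nonneg_right hpγ.le (abs_nonneg _)

theorem concaveOn_stage (hs : s < T) (c : ℝ) :
    ConcaveOn ℝ (univ ×ˢ univ.pi fun i => Icc 0 (M.dbar i)) fun p => M.stage s c p.1 p.2 := by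
  obtain ⟨-, hpmp, -⟩ := M.A1 s hs
  refine ⟨convex_univ.prod (convex_pi fun i _ => convex_Icc _ _), ?_⟩
  rintro ⟨v₁, d₁⟩ ⟨-, hd₁⟩ ⟨v₂, d₂⟩ ⟨-, hd₂⟩ a b ha hb hab
  simp only [mem_univ_pi] at hd₁ hd₂
  have hU : a * ∑ i, M.U i (d₁ i) + b * ∑ i, M.U i (d₂ i) ≤
      ∑ i, M.U i (a * d₁ i + b * d₂ i) := by
    rw [Finset.mul_sum, Finset.mul_sum, ← Finset.sum_add_distrib]
    exact Finset.sum_le_sum fun i _ => (M.U_strictConcave i).concaveOn.2 (hd₁ i) (hd₂ i) ha hb hab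
  have hN := (convexOn_NEMPayment hpmp).2 (mem_univ (v₁ + ∑ i, d₁ i - c))
    (mem_univ (v₂ + ∑ i, d₂ i - c)) ha hb hab
  have hz : a * v₁ + b * v₂ + ∑ i, (a * d₁ i + b * d₂ i) - c =
      a * (v₁ + ∑ i, d₁ i - c) + b * (v₂ + ∑ i, d₂ i - c) := by
    rw [Finset.sum_add_distrib, ← Finset.mul_sum, ← Finset.mul_sum]
    linear_combination c * hab
  simp only [stage, Prod.smul_mk, Prod.mk_add_mk, Pi.add_apply, Pi.smul_apply, smul_eq_mul] at hN ⊢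
  rw [hz]
  linarith

theorem convex_feas_graph : Convex ℝ {q : ℝ × (ℝ × (Fin K → ℝ)) | q.2 ∈ M.feas q.1} := by
  rintro ⟨y₁, v₁, d₁⟩ ⟨⟨hv₁, hv₁'⟩, hd₁⟩ ⟨y₂, v₂, d₂⟩ ⟨⟨hv₂, hv₂'⟩, hd₂⟩ a b ha hb hab
  rw [le_min_iff] at hv₁' hv₂'
  have hv := convex_Icc 0 M.vbar ⟨hv₁, hv₁'.1⟩ ⟨hv₂, hv₂'.1⟩ ha hb hab
  refine ⟨⟨hv.1, le_min hv.2 ?_⟩, fun i => convex_Icc _ _ (hd₁ i) (hd₂ i) ha hb hab⟩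
  exact add_le_add (mul_le_mul_of_nonneg_left hv₁'.2 ha) (mul_le_mul_of_nonneg_left hv₂'.2 hb)

theorem concaveOn_bellmanObjective (hs : s < T) (c : ℝ) {φ : ℝ → ℝ}
    (hφ : ConcaveOn ℝ (Ici 0) φ) :
    ConcaveOn ℝ {q : ℝ × (ℝ × (Fin K → ℝ)) | q.2 ∈ M.feas q.1}
      fun q => M.stage s c q.2.1 q.2.2 + φ (q.1 - q.2.1) := by
  have hstage := ((M.concaveOn_stage hs c).comp_linearMap
    (LinearMap.snd ℝ ℝ (ℝ × (Fin K → ℝ)))).subset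
    (fun q hq => ⟨mem_univ _, fun i _ => hq.2 i⟩) M.convex_feas_graph
  have hcont := (hφ.comp_linearMap (LinearMap.fst ℝ ℝ (ℝ × (Fin K → ℝ)) -
    (LinearMap.fst ℝ ℝ (Fin K → ℝ)).comp (LinearMap.snd ℝ ℝ (ℝ × (Fin K → ℝ))))).subset
    (fun q hq => sub_nonneg.2 (hq.1.2.trans (min_le_right _ _))) M.convex_feas_graph
  exact hstage.add hcont

noncomputable def bellmanValue (s : ℕ) (φ : ℝ → ℝ) (y c : ℝ) : ℝ :=
  ⨆ p : M.feas y, M.stage s c (p : ℝ × (Fin K → ℝ)).1 (p : ℝ × (Fin K → ℝ)).2 +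
    φ (y - (p : ℝ × (Fin K → ℝ)).1)

theorem W_zero : M.W 0 = M.bellmanValue (T - 1) fun z => -M.γ * z := by
  ext y c
  simp only [W, bellmanValue, sSup_image', neg_mul, ← sub_eq_add_neg]

theorem W_succ (k : ℕ) :
    M.W (k + 1) = M.bellmanValue (T - 2 - k) fun z => ∫ ω, M.W k z (M.r (T - 1 - k) ω) ∂M.μ := by
  ext y c
  simp only [W, bellmanValue, sSup_image']

theorem isRegularValue_bellmanValue (hs : s < T) {φ : ℝ → ℝ} {B : ℝ}
    (hφ : ConcaveOn ℝ (Ici 0) φ) (hφB : ∀ z, 0 ≤ z → φ z ≤ B) :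
    IsRegularValue M.γ (∑ i, M.U i (M.dbar i) + B) (M.bellmanValue s φ) := by
  have hne : ∀ y ∈ Ici (0 : ℝ), Nonempty (M.feas y) := fun y hy =>
    ⟨⟨(0, 0), ⟨le_rfl, le_min M.vbar_pos.le hy⟩, fun i => ⟨le_rfl, (M.dbar_pos i).le⟩⟩⟩
  have hle : ∀ y c (p : M.feas y), M.stage s c (p : ℝ × (Fin K → ℝ)).1 (p : ℝ × (Fin K → ℝ)).2 +
      φ (y - (p : ℝ × (Fin K → ℝ)).1) ≤ ∑ i, M.U i (M.dbar i) + B + M.γ * |c| := by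
    rintro y c ⟨⟨v, d⟩, ⟨hv, hvy⟩, hd⟩
    have := M.stage_le hs hv hd c
    have := hφB (y - v) (sub_nonneg.2 (hvy.trans (min_le_right _ _)))
    dsimp only
    linarith
  have hbdd : ∀ y c, BddAbove (range fun p : M.feas y =>
      M.stage s c (p : ℝ × (Fin K → ℝ)).1 (p : ℝ × (Fin K → ℝ)).2 +
        φ (y - (p : ℝ × (Fin K → ℝ)).1)) :=
    fun y c => ⟨_, forall_mem_range.2 (hle y c)⟩
  refine ⟨fun y hy c => ?_, fun y hy c₁ c₂ => ?_, fun c => ?_⟩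
  · have := hne y hy
    exact ciSup_le (hle y c)
  · have := hne y hy
    exact abs_ciSup_sub_ciSup_le (hbdd y c₁) (hbdd y c₂) fun p => by
      rw [add_sub_add_right_eq_sub]
      exact M.abs_stage_sub_stage_le hs _ _ c₁ c₂
  · exact (M.concaveOn_bellmanObjective hs c hφ).ciSup_fiber (convex_Ici 0) hne
      fun y _ => hbdd y c

theorem isRegularValue_W (hT : 0 < T) (k : ℕ) : ∃ A, IsRegularValue M.γ A (M.W k) := by
  have := M.prob
  induction k with
  | zero =>
    obtain ⟨hpm, hpmp, hpγ⟩ := M.A1 (T - 1) (by omega)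
    rw [W_zero]
    exact ⟨_, M.isRegularValue_bellmanValue (by omega)
      ((LinearMap.mulLeft ℝ (-M.γ)).concaveOn (convex_Ici 0))
      fun z hz => by nlinarith⟩
  | succ k ih =>
    obtain ⟨A, hA⟩ := ih
    rw [W_succ]
    exact ⟨_, M.isRegularValue_bellmanValue (by omega) (hA.concaveOn_integral (M.r_int _))
      fun z hz => hA.integral_le (M.r_int _) hz⟩

theorem concaveOn_Vbar (hT : 0 < T) (t : ℕ) : ConcaveOn ℝ (Ici 0) (M.Vbar t) := by
  have := M.prob
  obtain ⟨A, hA⟩ := M.isRegularValue_W hT (T - 1 - t)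
  exact hA.concaveOn_integral (M.r_int t)

theorem isMaxOn_U_sub_mul (i : Fin K) {L l : ℝ → ℝ}
    (hL : ∀ x ∈ Icc 0 (M.dbar i), HasDerivWithinAt (M.U i) (L x) (Icc 0 (M.dbar i)) x)
    (hl_mem : ∀ π, l π ∈ Icc 0 (M.dbar i)) (hl_hi : ∀ π, π ≤ L (M.dbar i) → l π = M.dbar i)
    (hl_lo : ∀ π, L 0 ≤ π → l π = 0) (hl_mid : ∀ π, L (M.dbar i) < π → π < L 0 → L (l π) = π)
    (π : ℝ) : IsMaxOn (fun x => M.U i x - π * x) (Icc 0 (M.dbar i)) (l π) := by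
  refine (M.U_strictConcave i).concaveOn.isMaxOn_sub_mul_of_hasDerivWithinAt (hl_mem π)
    (hL _ (hl_mem π)) fun x hx => ?_
  rcases le_or_gt π (L (M.dbar i)) with hhi | hhi
  · rw [hl_hi π hhi]
    exact mul_nonpos_of_nonneg_of_nonpos (sub_nonneg.2 hhi) (sub_nonpos.2 hx.2)
  rcases le_or_gt (L 0) π with hlo | hlo
  · rw [hl_lo π hlo, sub_zero]
    exact mul_nonpos_of_nonpos_of_nonneg (sub_nonpos.2 hlo) hx.1
  · rw [hl_mid π hhi hlo, sub_self, zero_mul]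

theorem isMaxOn_netConsumptionObjective {φ : ℝ → ℝ} (hφ : ConcaveOn ℝ (Ici 0) φ) {π τ y rt : ℝ}
    (hτ : 0 ≤ τ) (hτφ : -π ∈ superdiff φ τ) {d : Fin K → ℝ}
    (hd : ∀ i, IsMaxOn (fun x => M.U i x - π * x) (Icc 0 (M.dbar i)) (d i)) :
    IsMaxOn (fun p : ℝ × (Fin K → ℝ) => ∑ i, M.U i (p.2 i) - π * (p.1 + ∑ i, p.2 i - rt) +
      φ (y - p.1)) (M.feas y) (min M.vbar (max (y - τ) 0), d) := by
  have hv := (hφ.add ((LinearMap.mulLeft ℝ π).concaveOn (convex_Ici 0))).isMaxOn_sub_clip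
    (vb := M.vbar) (y := y) hτ fun z hz => by
      have := hτφ z hz
      simp only [Pi.add_apply, LinearMap.mulLeft_apply]
      linarith
  refine isMaxOn_iff.2 fun q hq => ?_
  have hv' := isMaxOn_iff.1 hv q.1 hq.1
  have hsum : ∑ i, (M.U i (q.2 i) - π * q.2 i) ≤ ∑ i, (M.U i (d i) - π * d i) :=
    Finset.sum_le_sum fun i _ => isMaxOn_iff.1 (hd i) _ (hq.2 i)
  simp only [Finset.sum_sub_distrib, ← Finset.mul_sum] at hsum
  simp only [Pi.add_apply, LinearMap.mulLeft_apply] at hv'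
  linarith

end EVModel

theorem thm1_net_consumption_zone_general (K T : ℕ) (Ω : Type) [MeasurableSpace Ω]
    (M : EVModel K T Ω)
    -- `L i` is the marginal utility `U_i'` on `[0, d̄_i]`
    (L : Fin K → ℝ → ℝ)
    (hL : ∀ i, ∀ x ∈ Set.Icc 0 (M.dbar i),
      HasDerivWithinAt (M.U i) (L i x) (Set.Icc 0 (M.dbar i)) x)
    -- `l i π = max {0, min {d̄_i, L_i⁻¹(π)}}`, characterized by clipping
    (l : Fin K → ℝ → ℝ)
    (hl_mem : ∀ i π, l i π ∈ Set.Icc 0 (M.dbar i))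
    (hl_hi : ∀ i π, π ≤ L i (M.dbar i) → l i π = M.dbar i)
    (hl_lo : ∀ i π, L i 0 ≤ π → l i π = 0)
    (hl_mid : ∀ i π, L i (M.dbar i) < π → π < L i 0 → L i (l i π) = π)
    (t : ℕ) (ht : t < T - 1) (y : ℝ) (hy : 0 ≤ y) (rt : ℝ)
    (τ : ℝ) (hτ : τ ∈ Set.Icc 0 (((T - t - 1 : ℕ) : ℝ) * M.vbar))
    (hτh : -M.pip t ∈ M.h (t + 1) τ)
    -- the net-consumption zone condition: `v* + ∑ i d*_i > r_t`
    (hzone : rt < min M.vbar (max (y - τ) 0) + ∑ i, l i (M.pip t)) :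
    M.IsBellmanOpt t y rt (min M.vbar (max (y - τ) 0), fun i => l i (M.pip t)) ∧
      IsMaxOn
        (fun p : ℝ × (Fin K → ℝ) =>
          ∑ i, M.U i (p.2 i) - M.pip t * (p.1 + ∑ i, p.2 i - rt) + M.Vbar (t + 1) (y - p.1))
        {p | p ∈ M.feas y ∧ rt ≤ p.1 + ∑ i, p.2 i}
        (min M.vbar (max (y - τ) 0), fun i => l i (M.pip t)) := by
  obtain ⟨-, hpmp, -⟩ := M.A1 t (by omega)
  have hP := M.isMaxOn_netConsumptionObjective (y := y) (rt := rt)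
    (M.concaveOn_Vbar (by omega) (t + 1)) hτ.1 hτh
    fun i => M.isMaxOn_U_sub_mul i (hL i) (hl_mem i) (hl_hi i) (hl_lo i) (hl_mid i) (M.pip t)
  have hv : min M.vbar (max (y - τ) 0) ∈ Icc 0 (min M.vbar y) :=
    ⟨le_min M.vbar_pos.le (le_max_right _ _),
      min_le_min_left _ (max_le (by linarith [hτ.1]) hy)⟩
  refine ⟨⟨⟨hv, fun i => hl_mem i _⟩, fun q hq => ?_⟩, hP.on_subset fun q hq => hq.1⟩
  have hbell : ∀ p, M.bellObj t y rt p = M.stage t rt p.1 p.2 + M.Vbar (t + 1) (y - p.1) :=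
    fun p => by rw [EVModel.bellObj, if_neg (by omega)]; rfl
  have hq := isMaxOn_iff.1 hP q hq
  have hpay := mul_le_NEMPayment_left hpmp (q.1 + ∑ i, q.2 i - rt)
  rw [hbell, hbell, EVModel.stage, EVModel.stage, NEMPayment_of_nonneg (sub_nonneg.2 hzone.le)]
  dsimp only at hq ⊢
  linarith

/-- **Theorem 1, net consumption zone.**
Let `τ_t ∈ [0, (T - t - 1) v̄]` satisfy `-π_t⁺ ∈ h_{t+1}(τ_t)`.  Then
`d*_i = l_i(π_t⁺)` together with `v* = min {v̄, max {y_t - τ_t, 0}}` is optimal for the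
Bellman equation at time `t` whenever `v* + ∑ i d*_i > r_t`; equivalently `(v*, d*)`
solves the convex program `P⁺` (maximize over `v + ∑ d ≥ r_t`) with the
net-consumption constraint inactive. -/
theorem thm1_net_consumption_zone (K T : ℕ) (Ω : Type) [MeasurableSpace Ω]
    (M : EVModel K T Ω)
    -- `L i` is the marginal utility `U_i'` on `[0, d̄_i]`
    (L : Fin K → ℝ → ℝ)
    (hL : ∀ i, ∀ x ∈ Set.Icc 0 (M.dbar i),
      HasDerivWithinAt (M.U i) (L i x) (Set.Icc 0 (M.dbar i)) x)
    (hLcont : ∀ i, ContinuousOn (L i) (Set.Icc 0 (M.dbar i)))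
    -- `l i π = max {0, min {d̄_i, L_i⁻¹(π)}}`, characterized by clipping
    (l : Fin K → ℝ → ℝ)
    (hl_mem : ∀ i π, l i π ∈ Set.Icc 0 (M.dbar i))
    (hl_hi : ∀ i π, π ≤ L i (M.dbar i) → l i π = M.dbar i)
    (hl_lo : ∀ i π, L i 0 ≤ π → l i π = 0)
    (hl_mid : ∀ i π, L i (M.dbar i) < π → π < L i 0 → L i (l i π) = π)
    (t : ℕ) (ht : t < T - 1) (y : ℝ) (hy : 0 ≤ y) (rt : ℝ) (hrt : 0 ≤ rt)
    (τ : ℝ) (hτ : τ ∈ Set.Icc 0 (((T - t - 1 : ℕ) : ℝ) * M.vbar))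
    (hτh : -M.pip t ∈ M.h (t + 1) τ)
    -- the net-consumption zone condition: `v* + ∑ i d*_i > r_t`
    (hzone : rt < min M.vbar (max (y - τ) 0) + ∑ i, l i (M.pip t)) :
    M.IsBellmanOpt t y rt (min M.vbar (max (y - τ) 0), fun i => l i (M.pip t)) ∧
      IsMaxOn
        (fun p : ℝ × (Fin K → ℝ) =>
          ∑ i, M.U i (p.2 i) - M.pip t * (p.1 + ∑ i, p.2 i - rt) + M.Vbar (t + 1) (y - p.1))
        {p | p ∈ M.feas y ∧ rt ≤ p.1 + ∑ i, p.2 i}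
        (min M.vbar (max (y - τ) 0), fun i => l i (M.pip t)) :=
  thm1_net_consumption_zone_general K T Ω M L hL l hl_mem hl_hi hl_lo hl_mid t ht y hy rt τ hτ hτh
    hzone
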